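/- arXiv:1201.2245 — 4 statements merged into one kernel-verified Lean document; each statement's English description precedes it below -/
import Mathlib

section
/- Let E be a real normed vector space and let Ω ⊆ E be a nonempty, open, connected subset that is scalar invariant, i.e. for every v ∈ Ω and every real number t ≠ 0 one has t • v ∈ Ω. Then the convex hull of Ω is all of E. -/
open Pointwise


/-- Let `E` be a real normed vector space and `Ω ⊆ E` a nonempty, open,
connected subset that is scalar invariant (closed under multiplication by every nonzero real
scalar). Then the convex hull of `Ω` is all of `E`. -/
theorem stmt_0 {E : Type*} [NormedAddCommGroup E] [NormedSpace ℝ E]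
    (Ω : Set E) (hne : Ω.Nonempty) (hopen : IsOpen Ω) (hconn : IsConnected Ω)
    (hscal : ∀ v ∈ Ω, ∀ t : ℝ, t ≠ 0 → t • v ∈ Ω) :
    convexHull ℝ Ω = Set.univ := by
  obtain ⟨v, hv⟩ := hne
  obtain ⟨ε, hε, hball⟩ := Metric.isOpen_iff.mp hopen v hv
  -- the hull is invariant under nonzero scaling
  have hull_scal : ∀ t : ℝ, t ≠ 0 → ∀ y ∈ convexHull ℝ Ω, t • y ∈ convexHull ℝ Ω := by
    intro t ht y hy
    have h1 : t • y ∈ convexHull ℝ (t • Ω) := by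
      rw [convexHull_smul]; exact Set.smul_mem_smul_set hy
    refine convexHull_mono ?_ h1
    rintro _ ⟨z, hz, rfl⟩
    exact hscal z hz t ht
  -- ball 0 ε ⊆ convexHull ℝ Ω
  have hball0 : ∀ w : E, ‖w‖ < ε → w ∈ convexHull ℝ Ω := by
    intro w hw
    have h1 : v + w ∈ Ω := by
      apply hball
      simp [Metric.mem_ball, dist_eq_norm, hw]
    have h2 : w - v ∈ Ω := by
      have h3 : v - w ∈ Ω := by
        apply hball
        simpa [Metric.mem_ball, dist_eq_norm, norm_sub_rev] using hw
      have := hscal _ h3 (-1) (by norm_num)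
      simpa [neg_sub] using this
    have hcomb : (1/2 : ℝ) • (v + w) + (1/2 : ℝ) • (w - v) = w := by
      rw [smul_add, smul_sub]
      module
    have := (convex_convexHull ℝ Ω) (subset_convexHull ℝ Ω h1)
      (subset_convexHull ℝ Ω h2) (by norm_num : (0:ℝ) ≤ 1/2)
      (by norm_num : (0:ℝ) ≤ 1/2) (by norm_num)
    rwa [hcomb] at this
  ext x
  simp only [Set.mem_univ, iff_true]
  rcases eq_or_ne x 0 with rfl | hx
  · exact hball0 0 (by simpa using hε)
  · set t : ℝ := ε / (2 * ‖x‖) with ht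
    have hxn : 0 < ‖x‖ := norm_pos_iff.mpr hx
    have htpos : 0 < t := by positivity
    have htx : ‖t • x‖ < ε := by
      rw [norm_smul, Real.norm_eq_abs, abs_of_pos htpos, ht]
      rw [div_mul_eq_mul_div, mul_comm]
      rw [div_lt_iff₀ (by positivity)]
      nlinarith
    have h1 : t • x ∈ convexHull ℝ Ω := hball0 _ htx
    have h2 := hull_scal t⁻¹ (by positivity) _ h1
    rwa [smul_smul, inv_mul_cancel₀ (ne_of_gt htpos), one_smul] at h2
end

section
/- For every real number δ, the plane curve ψ_δ : ℝ → ℝ² defined by ψ_δ(u) = (u³ − 3δu, u⁵/5 − (2/3)δu³ + δ²u) is injective. -/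
/-- For every real `δ`, the plane curve
`ψ_δ(u) = (u³ − 3δu, u⁵/5 − (2/3)δu³ + δ²u)` is injective. -/
theorem stmt_1 (δ : ℝ) :
    Function.Injective (fun u : ℝ =>
      (u ^ 3 - 3 * δ * u, u ^ 5 / 5 - 2 / 3 * δ * u ^ 3 + δ ^ 2 * u)) := by
  intro u v h
  simp only [Prod.mk.injEq] at h
  obtain ⟨h1, h2⟩ := h
  by_contra hne
  have hd : u - v ≠ 0 := sub_ne_zero.mpr hne
  -- divide both relations by (u - v)
  have e1 : u ^ 2 + u * v + v ^ 2 = 3 * δ := by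
    have : (u - v) * (u ^ 2 + u * v + v ^ 2 - 3 * δ) = 0 := by linear_combination h1
    have := (mul_eq_zero.mp this).resolve_left hd
    linarith
  have e2 : u ^ 4 + u ^ 3 * v + u ^ 2 * v ^ 2 + u * v ^ 3 + v ^ 4 = 5 * δ ^ 2 := by
    have : (u - v) * (u ^ 4 + u ^ 3 * v + u ^ 2 * v ^ 2 + u * v ^ 3 + v ^ 4 - 5 * δ ^ 2)
        = 0 := by linear_combination 5 * h2 + 10/3 * δ * (u - v) * e1
    have := (mul_eq_zero.mp this).resolve_left hd
    linarith
  -- eliminate δ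
  have key : (4 * u ^ 2 + 7 * u * v + 4 * v ^ 2) * (u - v) ^ 2 = 0 := by
    linear_combination 9 * e2 - 5 * (u ^ 2 + u * v + v ^ 2 + 3 * δ) * e1
  have hsq : (u - v) ^ 2 > 0 := by positivity
  nlinarith [sq_nonneg (u + v), sq_nonneg (u - v), mul_pos hsq hsq]
end

section
/- Let n ≥ 1 and t ∈ ℝ, and define W_t : ℝ × ℝ^{n−1} → ℝ^{n−1} × ℝ² by W_t(u, v) = (v, ψ_{t−‖v‖²}(u)). Then the derivative DW_t(u, v) is injective if and only if u² + ‖v‖² ≠ t. Consequently, the set of singular points of W_t is exactly the sphere {(u, v) : u² + ‖v‖² = t}: for t < 0 the map W_t is an immersion (and a smooth embedding), for t = 0 it has a single singular point at the origin (the embryo), and for t > 0 the singular set is an (n−1)-dimensional sphere (the wrinkle). -/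
/-- The wrinkle profile curve `ψ_δ(u) = (u³ − 3δu, u⁵/5 − (2/3)δu³ + δ²u)`. -/
noncomputable def psi (δ u : ℝ) : ℝ × ℝ :=
  (u ^ 3 - 3 * δ * u, u ^ 5 / 5 - 2 / 3 * δ * u ^ 3 + δ ^ 2 * u)

/-!
The `u`-derivative of `ψ_δ` is `(3(u² − δ), (u² − δ)²)`, and `DW_t(u, v)(a, w) = (w, a ∂ᵤψ + ∂ᵥψ w)`
has trivial kernel exactly when `∂ᵤψ ≠ 0`, i.e. when `u² ≠ t − ‖v‖²`. For `t < 0` every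
`δ = t − ‖v‖²` is negative, so `u ↦ u³ − 3δu` is strictly increasing and `W_t` is injective;
since moreover `|u³ − 3δu| ≥ |u|³`, the map `W_t` is proper, hence a closed embedding.
-/

open Function Filter Topology

theorem hasDerivAt_psi (δ u : ℝ) :
    HasDerivAt (psi δ) (3 * (u ^ 2 - δ), (u ^ 2 - δ) ^ 2) u := by
  have h₁ : HasDerivAt (fun u => u ^ 3 - 3 * δ * u) (3 * (u ^ 2 - δ)) u :=
    ((hasDerivAt_pow 3 u).sub ((hasDerivAt_id u).const_mul (3 * δ))).congr_deriv (by simp; ring)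
  have h₂ : HasDerivAt (fun u => u ^ 5 / 5 - 2 / 3 * δ * u ^ 3 + δ ^ 2 * u) ((u ^ 2 - δ) ^ 2) u :=
    ((((hasDerivAt_pow 5 u).div_const 5).sub ((hasDerivAt_pow 3 u).const_mul (2 / 3 * δ))).add
      ((hasDerivAt_id u).const_mul (δ ^ 2))).congr_deriv (by simp; ring)
  exact h₁.prodMk h₂

theorem strictMono_psi_fst {δ : ℝ} (hδ : δ < 0) : StrictMono fun u => (psi δ u).1 :=
  (Odd.strictMono_pow (by decide)).add_monotone fun a b hab => by nlinarith

theorem LinearMap.injective_snd_prod_iff {K E F : Type*} [Field K] [AddCommGroup E] [Module K E]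
    [AddCommGroup F] [Module K F] (L : K × E →ₗ[K] F) :
    Injective ((LinearMap.snd K K E).prod L) ↔ L (1, 0) ≠ 0 := by
  rw [← LinearMap.ker_eq_bot, LinearMap.ker_eq_bot']
  constructor
  · intro h hL
    simpa using h (1, 0) (by simp [hL])
  · rintro hL ⟨a, w⟩ hx
    obtain rfl : w = 0 := congrArg Prod.fst hx
    have : a • L (1, 0) = 0 := by
      rw [← map_smul]; simpa using congrArg Prod.snd hx
    simp [(smul_eq_zero.mp this).resolve_right hL]

theorem fderiv_apply_one_zero {𝕜 E F : Type*} [NontriviallyNormedField 𝕜]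
    [NormedAddCommGroup E] [NormedSpace 𝕜 E] [NormedAddCommGroup F] [NormedSpace 𝕜 F]
    {g : 𝕜 × E → F} {x : 𝕜} {y : E} {g' : F} (hg : DifferentiableAt 𝕜 g (x, y))
    (h : HasDerivAt (fun s => g (s, y)) g' x) : fderiv 𝕜 g (x, y) (1, 0) = g' := by
  simpa using (hg.hasFDerivAt.comp x (hasFDerivAt_prodMk_left x y)).hasDerivAt.unique h

noncomputable def wrinkle {E : Type*} [Norm E] (t : ℝ) (p : ℝ × E) : E × (ℝ × ℝ) :=
  (p.2, psi (t - ‖p.2‖ ^ 2) p.1)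

section Embedding

variable {E : Type*} [NormedAddCommGroup E] {t : ℝ}

theorem wrinkle_injective (ht : t < 0) : Injective (wrinkle (E := E) t) := by
  rintro ⟨u, v⟩ ⟨u', v'⟩ h
  simp only [wrinkle, Prod.mk.injEq] at h
  obtain ⟨rfl, hψ⟩ := h
  have hδ : t - ‖v‖ ^ 2 < 0 := by nlinarith [sq_nonneg ‖v‖]
  rw [(strictMono_psi_fst hδ).injective (congrArg Prod.fst hψ)]

theorem norm_le_norm_wrinkle_add_one (ht : t ≤ 0) (p : ℝ × E) :
    ‖p‖ ≤ ‖wrinkle t p‖ + 1 := by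
  obtain ⟨u, v⟩ := p
  have hv : ‖v‖ ≤ ‖wrinkle t (u, v)‖ := norm_fst_le (wrinkle t (u, v))
  have hx : |u ^ 3 - 3 * (t - ‖v‖ ^ 2) * u| ≤ ‖wrinkle t (u, v)‖ :=
    (norm_fst_le (psi _ u)).trans (norm_snd_le (wrinkle t (u, v)))
  have hu : |u| ≤ |u ^ 3 - 3 * (t - ‖v‖ ^ 2) * u| + 1 := by
    rw [show u ^ 3 - 3 * (t - ‖v‖ ^ 2) * u = u * (u ^ 2 + 3 * (‖v‖ ^ 2 - t)) by ring, abs_mul,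
      abs_of_nonneg (a := u ^ 2 + _) (by nlinarith [sq_nonneg u, sq_nonneg ‖v‖])]
    have ha := abs_nonneg u
    nlinarith [sq_abs u, mul_nonneg ha (sq_nonneg (|u| - 1)), mul_nonneg ha (sq_nonneg ‖v‖),
      mul_nonneg ha (neg_nonneg.mpr ht)]
  rw [Prod.norm_def, max_le_iff]
  exact ⟨by simpa using hu.trans (by linarith), by linarith⟩

theorem isClosedEmbedding_wrinkle [ProperSpace E] (ht : t < 0) :
    IsClosedEmbedding (wrinkle (E := E) t) := by
  have hcont : Continuous (wrinkle (E := E) t) := by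
    unfold wrinkle psi; fun_prop
  have hproper : Tendsto (wrinkle (E := E) t) (cocompact _) (cocompact _) := by
    rw [← Metric.cobounded_eq_cocompact, ← Metric.cobounded_eq_cocompact,
      ← tendsto_norm_atTop_iff_cobounded]
    exact tendsto_atTop_mono (fun p => by linarith [norm_le_norm_wrinkle_add_one ht.le p])
      (tendsto_atTop_add_const_right _ (-1) tendsto_norm_cobounded_atTop)
  exact .of_continuous_injective_isClosedMap hcont (wrinkle_injective ht)
    (isProperMap_iff_tendsto_cocompact.mpr ⟨hcont, hproper⟩).isClosedMap

end Embedding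

section Derivative

variable {E : Type*} [NormedAddCommGroup E] [InnerProductSpace ℝ E]

theorem differentiable_psi_sub_norm_sq (t : ℝ) :
    Differentiable ℝ fun p : ℝ × E => psi (t - ‖p.2‖ ^ 2) p.1 := by
  have : Differentiable ℝ fun p : ℝ × E => ‖p.2‖ ^ 2 := differentiable_snd.norm_sq ℝ
  unfold psi
  fun_prop

theorem fderiv_wrinkle (t : ℝ) (p : ℝ × E) :
    fderiv ℝ (wrinkle t) p = (ContinuousLinearMap.snd ℝ ℝ E).prod
      (fderiv ℝ (fun p : ℝ × E => psi (t - ‖p.2‖ ^ 2) p.1) p) :=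
  (hasFDerivAt_snd.prodMk (differentiable_psi_sub_norm_sq t p).hasFDerivAt).fderiv

theorem injective_fderiv_wrinkle_iff (t u : ℝ) (v : E) :
    Injective (fderiv ℝ (wrinkle t) (u, v)) ↔ u ^ 2 + ‖v‖ ^ 2 ≠ t := by
  set δ := t - ‖v‖ ^ 2
  have hu : fderiv ℝ (fun p : ℝ × E => psi (t - ‖p.2‖ ^ 2) p.1) (u, v) (1, 0)
      = (3 * (u ^ 2 - δ), (u ^ 2 - δ) ^ 2) :=
    fderiv_apply_one_zero (differentiable_psi_sub_norm_sq t _) (hasDerivAt_psi δ u)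
  rw [fderiv_wrinkle]
  refine (LinearMap.injective_snd_prod_iff (fderiv ℝ _ (u, v)).toLinearMap).trans ?_
  simp only [ContinuousLinearMap.coe_coe, hu, ne_eq, Prod.mk_eq_zero, mul_eq_zero,
    three_ne_zero, false_or, pow_eq_zero_iff two_ne_zero, and_self, sub_eq_zero, δ,
    eq_sub_iff_add_eq]

theorem setOf_not_injective_fderiv_wrinkle (t : ℝ) :
    {p : ℝ × E | ¬ Injective (fderiv ℝ (wrinkle t) p)} = {p | p.1 ^ 2 + ‖p.2‖ ^ 2 = t} := by
  ext ⟨u, v⟩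
  simp [injective_fderiv_wrinkle_iff]

end Derivative

theorem setOf_sq_add_norm_sq_eq_zero {E : Type*} [NormedAddCommGroup E] :
    {p : ℝ × E | p.1 ^ 2 + ‖p.2‖ ^ 2 = 0} = {(0, 0)} := by
  ext ⟨u, v⟩
  simp [add_eq_zero_iff_of_nonneg (sq_nonneg u) (sq_nonneg ‖v‖)]

theorem stmt_3_general (n : ℕ) (t : ℝ) :
    let V := EuclideanSpace ℝ (Fin (n - 1))
    let W : ℝ × V → V × (ℝ × ℝ) := fun p => (p.2, psi (t - ‖p.2‖ ^ 2) p.1)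
    (∀ (u : ℝ) (v : V),
        Function.Injective ⇑(fderiv ℝ W (u, v)) ↔ u ^ 2 + ‖v‖ ^ 2 ≠ t) ∧
    {p : ℝ × V | ¬ Function.Injective ⇑(fderiv ℝ W p)}
      = {p : ℝ × V | p.1 ^ 2 + ‖p.2‖ ^ 2 = t} ∧
    (t < 0 → (∀ p : ℝ × V, Function.Injective ⇑(fderiv ℝ W p)) ∧ Topology.IsEmbedding W) ∧
    (t = 0 → {p : ℝ × V | ¬ Function.Injective ⇑(fderiv ℝ W p)} = {((0 : ℝ), (0 : V))}) ∧
    (0 < t → {p : ℝ × V | ¬ Function.Injective ⇑(fderiv ℝ W p)}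
      = {p : ℝ × V | p.1 ^ 2 + ‖p.2‖ ^ 2 = t}) := by
  intro V W
  have hsing : {p : ℝ × V | ¬ Injective (fderiv ℝ W p)} = {p | p.1 ^ 2 + ‖p.2‖ ^ 2 = t} :=
    setOf_not_injective_fderiv_wrinkle t
  refine ⟨injective_fderiv_wrinkle_iff t, hsing, fun ht => ⟨?_, ?_⟩, ?_, fun _ => hsing⟩
  · rintro ⟨u, v⟩
    exact (injective_fderiv_wrinkle_iff t u v).mpr (ht.trans_le (by positivity)).ne'
  · exact (isClosedEmbedding_wrinkle ht).isEmbedding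
  · rintro rfl
    rw [hsing]
    exact setOf_sq_add_norm_sq_eq_zero

/-- For the wrinkle family `W_t(u, v) = (v, ψ_{t − ‖v‖²}(u))`, the derivative
`DW_t(u, v)` is injective iff `u² + ‖v‖² ≠ t`; the singular set is the sphere
`{u² + ‖v‖² = t}`; for `t < 0` the map is an immersion and a (smooth) embedding, for `t = 0`
the only singular point is the origin (the embryo), and for `t > 0` the singular set is the
sphere (the wrinkle). -/
theorem stmt_3 (n : ℕ) (hn : 1 ≤ n) (t : ℝ) :
    let V := EuclideanSpace ℝ (Fin (n - 1))
    let W : ℝ × V → V × (ℝ × ℝ) := fun p => (p.2, psi (t - ‖p.2‖ ^ 2) p.1)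
    (∀ (u : ℝ) (v : V),
        Function.Injective ⇑(fderiv ℝ W (u, v)) ↔ u ^ 2 + ‖v‖ ^ 2 ≠ t) ∧
    {p : ℝ × V | ¬ Function.Injective ⇑(fderiv ℝ W p)}
      = {p : ℝ × V | p.1 ^ 2 + ‖p.2‖ ^ 2 = t} ∧
    (t < 0 → (∀ p : ℝ × V, Function.Injective ⇑(fderiv ℝ W p)) ∧ Topology.IsEmbedding W) ∧
    (t = 0 → {p : ℝ × V | ¬ Function.Injective ⇑(fderiv ℝ W p)} = {((0 : ℝ), (0 : V))}) ∧
    (0 < t → {p : ℝ × V | ¬ Function.Injective ⇑(fderiv ℝ W p)}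
      = {p : ℝ × V | p.1 ^ 2 + ‖p.2‖ ^ 2 = t}) :=
  stmt_3_general n t
end

section
/- Let n ≥ 2 and define the Legendrian embryo model F : ℝ × ℝ^{n−1} → ℝⁿ × ℝⁿ × ℝ by x₁ = u³ + 3u‖v‖², (x₂,…,xₙ) = v, y₁ = (1/3)(u² + ‖v‖²), (y₂,…,yₙ) = 2u(‖v‖² − (1/3)u²)·v, z = u⁵/5 + (2/3)u³‖v‖² + u‖v‖⁴. Then F is injective, F satisfies the Legendrian condition Dz(p) = Σᵢ yᵢ(p)·Dxᵢ(p) at every point p, the derivative DF(u,v) is injective at every (u,v) ≠ (0,0), and at the origin the kernel of DF(0,0) is exactly ℝ·(1,0) (the ∂_u-direction), so the embryo is an isolated singular point at which DF has rank n − 1. -/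
/-!
Write `q = ‖v‖²`. The projection `(u, v) ↦ (x₁, v)` to the `x`-coordinates is already injective, because
`u ↦ u³ + 3qu` is strictly increasing; its differential `(du, dv) ↦ (3(u² + q) du + 6u⟨v, dv⟩, dv)`
is injective wherever `u² + q ≠ 0`, i.e. off the origin. At the origin all first-order terms of
`x₁`, `y` and `z` vanish, so the kernel is the `du`-line. The Legendrian condition is a direct
computation: `dz = (u² + q)² du + (4u³/3 + 4uq)⟨v, dv⟩ = y₁ dx₁ + ⟨(y₂, …, yₙ), dv⟩`.
-/

open ContinuousLinearMap

namespace LegendrianEmbryo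

noncomputable section

variable {V : Type*} [NormedAddCommGroup V] [InnerProductSpace ℝ V]

def x1 (p : ℝ × V) : ℝ := p.1 ^ 3 + 3 * p.1 * ‖p.2‖ ^ 2

def y1 (p : ℝ × V) : ℝ := (1 / 3) * (p.1 ^ 2 + ‖p.2‖ ^ 2)

def yr (p : ℝ × V) : V := (2 * p.1 * (‖p.2‖ ^ 2 - (1 / 3) * p.1 ^ 2)) • p.2

def z (p : ℝ × V) : ℝ := p.1 ^ 5 / 5 + 2 / 3 * p.1 ^ 3 * ‖p.2‖ ^ 2 + p.1 * ‖p.2‖ ^ 4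

def embryo (p : ℝ × V) : (ℝ × V) × (ℝ × V) × ℝ := ((x1 p, p.2), (y1 p, yr p), z p)

lemma strictMono_cube_add_mul {c : ℝ} (hc : 0 ≤ c) : StrictMono fun u : ℝ => u ^ 3 + c * u :=
  (Odd.strictMono_pow (by decide)).add_monotone (monotone_mul_left_of_nonneg hc)

omit [InnerProductSpace ℝ V] in
lemma injective_x1_snd : Function.Injective fun p : ℝ × V => (x1 p, p.2) := by
  rintro ⟨u, v⟩ ⟨u', v'⟩ h
  obtain ⟨hx, rfl : v = v'⟩ := Prod.mk.inj h
  have hmono := strictMono_cube_add_mul (c := 3 * ‖v‖ ^ 2) (by positivity)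
  have : u = u' := hmono.injective (by simp only [x1] at hx; linear_combination hx)
  rw [this]

lemma embryo_injective : Function.Injective (embryo (V := V)) :=
  fun _ _ h => injective_x1_snd (congrArg Prod.fst h)

def innerSnd (p : ℝ × V) : ℝ × V →L[ℝ] ℝ := (innerSL ℝ p.2).comp (snd ℝ ℝ V)

@[simp]
lemma innerSnd_apply (p w : ℝ × V) : innerSnd p w = inner ℝ p.2 w.2 := rfl

lemma hasFDerivAt_fst_pow (k : ℕ) (p : ℝ × V) :
    HasFDerivAt (fun p : ℝ × V => p.1 ^ k) ((k * p.1 ^ (k - 1)) • fst ℝ ℝ V) p := by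
  simpa using (hasFDerivAt_fst (𝕜 := ℝ) (p := p)).pow k

lemma hasFDerivAt_norm_snd_sq (p : ℝ × V) :
    HasFDerivAt (fun p : ℝ × V => ‖p.2‖ ^ 2) ((2 : ℝ) • innerSnd p) p := by
  simpa [innerSnd, two_smul] using (hasFDerivAt_snd : HasFDerivAt (Prod.snd : ℝ × V → V) _ p).norm_sq

lemma hasFDerivAt_x1 (p : ℝ × V) :
    HasFDerivAt x1 ((3 * (p.1 ^ 2 + ‖p.2‖ ^ 2)) • fst ℝ ℝ V + (6 * p.1) • innerSnd p) p := by
  have h := (hasFDerivAt_fst_pow 3 p).fun_add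
    (((hasFDerivAt_fst_pow 1 p).const_mul 3).fun_mul (hasFDerivAt_norm_snd_sq p))
  refine (h.congr_of_eventuallyEq (.of_forall fun q => ?_)).congr_fderiv ?_
  · simp only [x1]; ring
  · ext w <;> simp <;> ring

lemma hasFDerivAt_y1 (p : ℝ × V) :
    HasFDerivAt y1 ((2 / 3 * p.1) • fst ℝ ℝ V + (2 / 3 : ℝ) • innerSnd p) p := by
  have h := ((hasFDerivAt_fst_pow 2 p).fun_add (hasFDerivAt_norm_snd_sq p)).const_mul (1 / 3)
  refine (h.congr_of_eventuallyEq (.of_forall fun q => ?_)).congr_fderiv ?_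
  · simp only [y1]
  · ext w <;> simp <;> ring

lemma hasFDerivAt_z (p : ℝ × V) :
    HasFDerivAt z (((p.1 ^ 2 + ‖p.2‖ ^ 2) ^ 2) • fst ℝ ℝ V
      + (4 / 3 * p.1 ^ 3 + 4 * p.1 * ‖p.2‖ ^ 2) • innerSnd p) p := by
  have hq := hasFDerivAt_norm_snd_sq p
  have h := (((hasFDerivAt_fst_pow 5 p).const_mul (1 / 5)).fun_add
    (((hasFDerivAt_fst_pow 3 p).const_mul (2 / 3)).fun_mul hq)).fun_add
    ((hasFDerivAt_fst_pow 1 p).fun_mul (hq.pow 2))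
  refine (h.congr_of_eventuallyEq (.of_forall fun q => ?_)).congr_fderiv ?_
  · simp only [z]; ring
  · ext w <;> simp <;> ring

lemma hasFDerivAt_yr (p : ℝ × V) :
    HasFDerivAt yr ((2 * p.1 * (‖p.2‖ ^ 2 - (1 / 3) * p.1 ^ 2)) • snd ℝ ℝ V
      + ((2 * ‖p.2‖ ^ 2 - 2 * p.1 ^ 2) • fst ℝ ℝ V + (4 * p.1) • innerSnd p).smulRight p.2) p := by
  have hc := ((hasFDerivAt_fst_pow 1 p).const_mul 2).fun_mul
    ((hasFDerivAt_norm_snd_sq p).fun_sub ((hasFDerivAt_fst_pow 2 p).const_mul (1 / 3)))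
  have h := hc.fun_smul (hasFDerivAt_snd : HasFDerivAt (Prod.snd : ℝ × V → V) _ p)
  refine (h.congr_of_eventuallyEq (.of_forall fun q => ?_)).congr_fderiv ?_
  · simp only [yr, pow_one]
  · ext w <;> simp <;> module

lemma fderiv_embryo_apply (p w : ℝ × V) :
    fderiv ℝ embryo p w =
      ((fderiv ℝ x1 p w, w.2), (fderiv ℝ y1 p w, fderiv ℝ yr p w), fderiv ℝ z p w) := by
  have h := ((hasFDerivAt_x1 p).differentiableAt.hasFDerivAt.prodMk hasFDerivAt_snd).prodMk
    (((hasFDerivAt_y1 p).differentiableAt.hasFDerivAt.prodMk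
      (hasFDerivAt_yr p).differentiableAt.hasFDerivAt).prodMk
      (hasFDerivAt_z p).differentiableAt.hasFDerivAt)
  rw [HasFDerivAt.fderiv (f := embryo) h]
  rfl

lemma fderiv_z_eq_y_mul_fderiv_x (p w : ℝ × V) :
    fderiv ℝ z p w = y1 p * fderiv ℝ x1 p w + inner ℝ (yr p) w.2 := by
  simp only [(hasFDerivAt_z p).fderiv, (hasFDerivAt_x1 p).fderiv, y1, yr, real_inner_smul_left,
    add_apply, smul_apply, coe_fst', innerSnd_apply, smul_eq_mul]
  ring

omit [InnerProductSpace ℝ V] in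
lemma fst_sq_add_norm_snd_sq_pos {p : ℝ × V} (hp : p ≠ 0) : 0 < p.1 ^ 2 + ‖p.2‖ ^ 2 := by
  by_contra! h
  have hu : p.1 = 0 := by nlinarith [sq_nonneg p.1, sq_nonneg ‖p.2‖]
  have hv : ‖p.2‖ = 0 := by nlinarith [sq_nonneg p.1, sq_nonneg ‖p.2‖]
  exact hp (Prod.ext hu (norm_eq_zero.mp hv))

lemma injective_fderiv_embryo {p : ℝ × V} (hp : p ≠ 0) : Function.Injective (fderiv ℝ embryo p) := by
  refine (injective_iff_map_eq_zero _).mpr fun w hw => ?_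
  rw [fderiv_embryo_apply] at hw
  obtain ⟨hx, hv⟩ : fderiv ℝ x1 p w = 0 ∧ w.2 = 0 := Prod.mk.inj (congrArg Prod.fst hw)
  simp only [(hasFDerivAt_x1 p).fderiv, add_apply, smul_apply, coe_fst', innerSnd_apply, hv,
    inner_zero_right, smul_eq_mul, mul_zero, add_zero] at hx
  have hu : w.1 = 0 :=
    (mul_eq_zero.mp hx).resolve_left (by have := fst_sq_add_norm_snd_sq_pos hp; positivity)
  exact Prod.ext hu hv

lemma fderiv_embryo_zero_eq_zero_iff (w : ℝ × V) : fderiv ℝ embryo 0 w = 0 ↔ w.2 = 0 := by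
  simp [fderiv_embryo_apply, (hasFDerivAt_x1 0).fderiv, (hasFDerivAt_y1 0).fderiv,
    (hasFDerivAt_yr 0).fderiv, (hasFDerivAt_z 0).fderiv, Prod.ext_iff]

end

end LegendrianEmbryo

theorem stmt_9_general (n : ℕ) :
    let V := EuclideanSpace ℝ (Fin (n - 1))
    let x1 : ℝ × V → ℝ := fun p => p.1 ^ 3 + 3 * p.1 * ‖p.2‖ ^ 2
    let y1 : ℝ × V → ℝ := fun p => (1 / 3) * (p.1 ^ 2 + ‖p.2‖ ^ 2)
    let yr : ℝ × V → V := fun p => (2 * p.1 * (‖p.2‖ ^ 2 - (1 / 3) * p.1 ^ 2)) • p.2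
    let z : ℝ × V → ℝ := fun p =>
      p.1 ^ 5 / 5 + 2 / 3 * p.1 ^ 3 * ‖p.2‖ ^ 2 + p.1 * ‖p.2‖ ^ 4
    let F : ℝ × V → (ℝ × V) × (ℝ × V) × ℝ := fun p => ((x1 p, p.2), (y1 p, yr p), z p)
    Function.Injective F ∧
    (∀ p w : ℝ × V,
        fderiv ℝ z p w = y1 p * fderiv ℝ x1 p w + (inner ℝ (yr p) w.2 : ℝ)) ∧
    (∀ p : ℝ × V, p ≠ ((0 : ℝ), (0 : V)) → Function.Injective ⇑(fderiv ℝ F p)) ∧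
    {w : ℝ × V | fderiv ℝ F ((0 : ℝ), (0 : V)) w = 0}
      = {w : ℝ × V | ∃ t : ℝ, w = (t, 0)} := by
  intro V x1 y1 yr z F
  refine ⟨LegendrianEmbryo.embryo_injective, LegendrianEmbryo.fderiv_z_eq_y_mul_fderiv_x,
    fun p hp => LegendrianEmbryo.injective_fderiv_embryo hp, Set.ext fun w => ?_⟩
  exact (LegendrianEmbryo.fderiv_embryo_zero_eq_zero_iff w).trans
    ⟨fun hw => ⟨w.1, Prod.ext rfl hw⟩, fun ⟨t, ht⟩ => ht ▸ rfl⟩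

/-- The Legendrian embryo model
`x₁ = u³ + 3u‖v‖²`, `(x₂,…,xₙ) = v`, `y₁ = (1/3)(u² + ‖v‖²)`,
`(y₂,…,yₙ) = 2u(‖v‖² − (1/3)u²)·v`, `z = u⁵/5 + (2/3)u³‖v‖² + u‖v‖⁴` (with `n ≥ 2`) is
injective, satisfies the Legendrian condition `Dz(p) = Σᵢ yᵢ(p)·Dxᵢ(p)` at every point, is an
immersion away from the origin, and at the origin the kernel of the derivative is exactly
`ℝ·(1, 0)` (the `∂_u`-direction), so the embryo is an isolated singular point at which the
derivative has rank `n − 1`. -/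
theorem stmt_9 (n : ℕ) (hn : 2 ≤ n) :
    let V := EuclideanSpace ℝ (Fin (n - 1))
    let x1 : ℝ × V → ℝ := fun p => p.1 ^ 3 + 3 * p.1 * ‖p.2‖ ^ 2
    let y1 : ℝ × V → ℝ := fun p => (1 / 3) * (p.1 ^ 2 + ‖p.2‖ ^ 2)
    let yr : ℝ × V → V := fun p => (2 * p.1 * (‖p.2‖ ^ 2 - (1 / 3) * p.1 ^ 2)) • p.2
    let z : ℝ × V → ℝ := fun p =>
      p.1 ^ 5 / 5 + 2 / 3 * p.1 ^ 3 * ‖p.2‖ ^ 2 + p.1 * ‖p.2‖ ^ 4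
    let F : ℝ × V → (ℝ × V) × (ℝ × V) × ℝ := fun p => ((x1 p, p.2), (y1 p, yr p), z p)
    Function.Injective F ∧
    (∀ p w : ℝ × V,
        fderiv ℝ z p w = y1 p * fderiv ℝ x1 p w + (inner ℝ (yr p) w.2 : ℝ)) ∧
    (∀ p : ℝ × V, p ≠ ((0 : ℝ), (0 : V)) → Function.Injective ⇑(fderiv ℝ F p)) ∧
    {w : ℝ × V | fderiv ℝ F ((0 : ℝ), (0 : V)) w = 0}
      = {w : ℝ × V | ∃ t : ℝ, w = (t, 0)} :=
  stmt_9_general n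
end
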